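/- Let R > 0 be a real number, m ≥ 2 a natural number, σ a real number, and set a = 2^m·P_R(m), b = 2^m, c = −(R(R+1)·2^{m−1}·P_R(m) − R²·2^{m−2}·P_R(m−2)), d = (−1)^m·R^m. If b + cσ + dσ² ≠ 0, then for every natural number n, ∑_{k=0}^{n} P_R(km)·σ^k = (a·σ − σ^{n+1}·(b·P_R(m(n+1)) − d·σ·P_R(mn))) / (b + cσ + dσ²). -/

import Mathlib

/-- Generalized Pell numbers `P_R(n) = (2/(R·W))·(λⁿ − μⁿ)` with `W = √(R²+2R)`,
`λ = (R+W)/2`, `μ = (R−W)/2`. -/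
noncomputable def PR (R : ℝ) (n : ℕ) : ℝ :=
  (2 / (R * Real.sqrt (R ^ 2 + 2 * R))) *
    (((R + Real.sqrt (R ^ 2 + 2 * R)) / 2) ^ n - ((R - Real.sqrt (R ^ 2 + 2 * R)) / 2) ^ n)

/-!
Since `P_R(n) = C (λⁿ - μⁿ)`, the sequence `k ↦ P_R(km)` is a combination of the geometric
sequences `(λᵐ)ᵏ` and `(μᵐ)ᵏ`, so it satisfies the linear recurrence with characteristic polynomial
`2ᵐ (x - λᵐ)(x - μᵐ) = b x² + c x + d`: `λμ = -R/2` gives `d`, and `λᵐ + μᵐ` is expressed through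
`P_R(m)` and `P_R(m-2)` to give `c`. For any sequence with `u₀ = 0` obeying such a recurrence,
multiplying `∑ u_k σᵏ` by `b + cσ + dσ²` telescopes.
-/

theorem sum_range_mul_pow_mul_of_recurrence {α : Type*} [CommRing α] {u : ℕ → α} {b c d : α}
    (h0 : u 0 = 0) (hrec : ∀ k, b * u (k + 2) + c * u (k + 1) + d * u k = 0) (σ : α) (n : ℕ) :
    (∑ k ∈ Finset.range (n + 1), u k * σ ^ k) * (b + c * σ + d * σ ^ 2) =
      b * u 1 * σ - σ ^ (n + 1) * (b * u (n + 1) - d * σ * u n) := by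
  induction n with
  | zero =>
    simp only [zero_add, Finset.sum_range_one, h0, zero_mul, mul_zero, sub_zero, pow_one]
    ring
  | succ n ih =>
    rw [Finset.sum_range_succ, add_mul, ih]
    linear_combination σ ^ (n + 2) * hrec n

namespace PR

variable {R : ℝ}

noncomputable def sqrtDisc (R : ℝ) : ℝ := Real.sqrt (R ^ 2 + 2 * R)

noncomputable def lam (R : ℝ) : ℝ := (R + sqrtDisc R) / 2

noncomputable def mu (R : ℝ) : ℝ := (R - sqrtDisc R) / 2

theorem eq_mul_sub (R : ℝ) (n : ℕ) :
    PR R n = 2 / (R * sqrtDisc R) * (lam R ^ n - mu R ^ n) := rfl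

theorem sqrtDisc_sq (hR : 0 < R) : sqrtDisc R ^ 2 = R ^ 2 + 2 * R :=
  Real.sq_sqrt (by positivity)

theorem sqrtDisc_pos (hR : 0 < R) : 0 < sqrtDisc R :=
  Real.sqrt_pos.mpr (by positivity)

theorem lam_mul_mu (hR : 0 < R) : lam R * mu R = -R / 2 := by
  unfold lam mu
  linear_combination (-1 / 4 : ℝ) * sqrtDisc_sq hR

theorem neg_one_pow_mul_pow (hR : 0 < R) (m : ℕ) :
    (-1 : ℝ) ^ m * R ^ m = 2 ^ m * (lam R * mu R) ^ m := by
  rw [lam_mul_mu hR, ← mul_pow, ← mul_pow]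
  ring_nf

theorem two_pow_mul_lam_pow_add_mu_pow (hR : 0 < R) {m : ℕ} (hm : 2 ≤ m) :
    2 ^ m * (lam R ^ m + mu R ^ m) =
      R * (R + 1) * 2 ^ (m - 1) * PR R m - R ^ 2 * 2 ^ (m - 2) * PR R (m - 2) := by
  obtain ⟨p, rfl⟩ : ∃ p, m = p + 2 := ⟨m - 2, by omega⟩
  have hW := sqrtDisc_sq hR
  -- `λ² = R(R+1+W)/2` and `(R+1)² - W² = 1`
  have hlam : (R + 1 - sqrtDisc R) * lam R ^ 2 = R / 2 := by
    unfold lam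
    linear_combination ((R + 1 - sqrtDisc R) / 4 - R / 2) * hW
  have hmu : (R + 1 + sqrtDisc R) * mu R ^ 2 = R / 2 := by
    unfold mu
    linear_combination ((R + 1 + sqrtDisc R) / 4 - R / 2) * hW
  rw [show p + 2 - 1 = p + 1 by omega, Nat.add_sub_cancel, eq_mul_sub, eq_mul_sub]
  field_simp [(sqrtDisc_pos hR).ne', hR.ne']
  linear_combination 2 ^ (p + 2) * (mu R ^ p * hmu - lam R ^ p * hlam)

theorem add_two_mul_recurrence (R : ℝ) (m k : ℕ) :
    PR R ((k + 2) * m) - (lam R ^ m + mu R ^ m) * PR R ((k + 1) * m) +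
      (lam R * mu R) ^ m * PR R (k * m) = 0 := by
  simp only [eq_mul_sub, pow_mul']
  ring

end PR

/-- Closed form for the weighted partial sums `∑_{k=0}^{n} P_R(km)·σ^k`. -/
theorem PR_weighted_partial_sum (R : ℝ) (hR : 0 < R) (m : ℕ) (hm : 2 ≤ m) (σ : ℝ)
    (a b c d : ℝ) (ha : a = 2 ^ m * PR R m) (hb : b = 2 ^ m)
    (hc : c = -(R * (R + 1) * 2 ^ (m - 1) * PR R m - R ^ 2 * 2 ^ (m - 2) * PR R (m - 2)))
    (hd : d = (-1 : ℝ) ^ m * R ^ m) (hden : b + c * σ + d * σ ^ 2 ≠ 0) (n : ℕ) :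
    ∑ k ∈ Finset.range (n + 1), PR R (k * m) * σ ^ k =
      (a * σ - σ ^ (n + 1) * (b * PR R (m * (n + 1)) - d * σ * PR R (m * n))) /
        (b + c * σ + d * σ ^ 2) := by
  rw [← PR.two_pow_mul_lam_pow_add_mu_pow hR hm] at hc
  rw [PR.neg_one_pow_mul_pow hR] at hd
  have hrec (k : ℕ) :
      b * PR R ((k + 2) * m) + c * PR R ((k + 1) * m) + d * PR R (k * m) = 0 := by
    rw [hb, hc, hd]
    linear_combination 2 ^ m * PR.add_two_mul_recurrence R m k
  have h0 : PR R (0 * m) = 0 := by simp [PR]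
  rw [eq_div_iff hden, sum_range_mul_pow_mul_of_recurrence (u := fun k => PR R (k * m)) h0 hrec,
    ha, hb, one_mul, mul_comm m, mul_comm m]
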